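/- arXiv:2512.24453 — 2 statements merged into one kernel-verified Lean document; each statement's English description precedes it below -/
import Mathlib

section
/- Let H : (ℝ → ℝ) → (ℝ → ℝ) map measurable functions to measurable functions, be causal, and be finite-gain stable with gain h ≥ 0. Let u₁ ∈ L²([0,∞)) and let u₂ be a power signal. Then limsup_{T→∞} (1/T)∫₀ᵀ ((H(u₁+u₂))(t))² dt ≤ h² · limsup_{T→∞} (1/T)∫₀ᵀ u₂(t)² dt; that is, ‖H(u₁+u₂)‖_P ≤ h‖u₂‖_P. -/
open MeasureTheory Filter
open scoped ENNReal

/-- Power of a signal: `limsup_{T→∞} (1/T) ∫₀ᵀ u(t)² dt`, in `[0, ∞]`. -/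
noncomputable def powerSq (u : ℝ → ℝ) : ℝ≥0∞ :=
  Filter.limsup (fun T : ℝ => ENNReal.ofReal ((1 / T) * ∫ t in Set.Ioc (0 : ℝ) T, (u t) ^ 2))
    Filter.atTop

/-- The truncation `u_T`: equal to `u` on `[0, T]` and `0` elsewhere. -/
noncomputable def trunc (u : ℝ → ℝ) (T : ℝ) : ℝ → ℝ := fun t => if 0 ≤ t ∧ t ≤ T then u t else 0

/-- `H` is causal: for every input `u` and every `T > 0`, `(H u)(t) = (H u_T)(t)` for
almost every `t ∈ [0, T]`. -/
def Causal (H : (ℝ → ℝ) → ℝ → ℝ) : Prop :=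
  ∀ u : ℝ → ℝ, ∀ T : ℝ, 0 < T →
    ∀ᵐ t ∂(volume.restrict (Set.Icc (0 : ℝ) T)), H u t = H (trunc u T) t

/-- Membership of `L²([0,∞))`. -/
def MemL2pos (u : ℝ → ℝ) : Prop := MemLp u 2 (volume.restrict (Set.Ici (0 : ℝ)))

/-- `H` is finite-gain stable with gain `h`. -/
def FGS (H : (ℝ → ℝ) → ℝ → ℝ) (h : ℝ) : Prop :=
  ∀ u : ℝ → ℝ, MemL2pos u → MemL2pos (H u) ∧
    eLpNorm (H u) 2 (volume.restrict (Set.Ici (0 : ℝ))) ≤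
      ENNReal.ofReal h * eLpNorm u 2 (volume.restrict (Set.Ici (0 : ℝ)))

/-!
Measure a signal on the window `(0, T]` by its root mean square
`rms u T = T^{-1/2} ‖u‖_{L²(0,T]}`; for locally square-integrable `u`,
`powerSq u = (limsup_T rms u T)²`. By causality `H v` agrees on `[0, T]` with `H v_T`, and
`v_T ∈ L²`, so finite-gain stability gives `rms (H v) T ≤ h · rms v T`. The `rms` is
subadditive, and for `u₁ ∈ L²` it is at most `T^{-1/2} ‖u₁‖_{L²} → 0`, hence
`limsup rms (H (u₁ + u₂)) ≤ h · limsup rms u₂`.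
-/

open Set Topology

section

variable {α : Type*} [MeasurableSpace α] {μ : Measure α}

lemma eLpNorm_two_sq (f : α → ℝ) : eLpNorm f 2 μ ^ 2 = ∫⁻ t, ‖f t‖ₑ ^ 2 ∂μ := by
  simpa only [ENNReal.coe_ofNat, NNReal.coe_ofNat, ENNReal.rpow_two] using
    eLpNorm_nnreal_pow_eq_lintegral (μ := μ) (f := f) (p := 2) two_ne_zero

lemma ofReal_integral_sq_le (f : α → ℝ) :
    ENNReal.ofReal (∫ t, f t ^ 2 ∂μ) ≤ eLpNorm f 2 μ ^ 2 := by
  rw [eLpNorm_two_sq]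
  simp_rw [← enorm_pow]
  exact (Real.ofReal_le_enorm _).trans (enorm_integral_le_lintegral_enorm _)

lemma MeasureTheory.MemLp.ofReal_integral_sq {f : α → ℝ} (hf : MemLp f 2 μ) :
    ENNReal.ofReal (∫ t, f t ^ 2 ∂μ) = eLpNorm f 2 μ ^ 2 := by
  rw [ofReal_integral_eq_lintegral_ofReal hf.integrable_sq (ae_of_all _ fun t => sq_nonneg _),
    eLpNorm_two_sq]
  refine lintegral_congr fun t => ?_
  rw [← Real.enorm_eq_ofReal (sq_nonneg _), enorm_pow]

end

lemma ENNReal.limsup_sq {β : Type*} {l : Filter β} (u : β → ℝ≥0∞) :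
    limsup (fun x => u x ^ 2) l = limsup u l ^ 2 := by
  simpa only [ENNReal.orderIsoRpow_apply, ENNReal.rpow_two] using
    ((ENNReal.orderIsoRpow 2 two_pos).limsup_apply (u := u) (f := l)).symm

lemma ENNReal.ofReal_sq_le (x : ℝ) : ENNReal.ofReal x ^ 2 ≤ ENNReal.ofReal (x ^ 2) := by
  rcases le_total 0 x with hx | hx
  · rw [ENNReal.ofReal_pow hx]
  · simp [ENNReal.ofReal_of_nonpos hx]

noncomputable def rms (u : ℝ → ℝ) (T : ℝ) : ℝ≥0∞ :=
  (ENNReal.ofReal √T)⁻¹ * eLpNorm u 2 (volume.restrict (Ioc 0 T))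

lemma rms_sq (u : ℝ → ℝ) {T : ℝ} (hT : 0 < T) :
    rms u T ^ 2 = ENNReal.ofReal (1 / T) * eLpNorm u 2 (volume.restrict (Ioc 0 T)) ^ 2 := by
  rw [rms, mul_pow, ← ENNReal.inv_pow, ← ENNReal.ofReal_pow (Real.sqrt_nonneg T),
    Real.sq_sqrt hT.le, one_div, ENNReal.ofReal_inv_of_pos hT]

lemma ofReal_mean_sq_le_rms_sq (u : ℝ → ℝ) {T : ℝ} (hT : 0 < T) :
    ENNReal.ofReal (1 / T * ∫ t in Ioc 0 T, u t ^ 2) ≤ rms u T ^ 2 := by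
  rw [rms_sq u hT, ENNReal.ofReal_mul (by positivity)]
  gcongr
  exact ofReal_integral_sq_le u

lemma MeasureTheory.MemLp.rms_sq {u : ℝ → ℝ} {T : ℝ}
    (hu : MemLp u 2 (volume.restrict (Ioc 0 T))) (hT : 0 < T) :
    rms u T ^ 2 = ENNReal.ofReal (1 / T * ∫ t in Ioc 0 T, u t ^ 2) := by
  rw [_root_.rms_sq u hT, ENNReal.ofReal_mul (by positivity), hu.ofReal_integral_sq]

lemma powerSq_le_limsup_rms_sq (u : ℝ → ℝ) : powerSq u ≤ limsup (rms u) atTop ^ 2 := by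
  rw [← ENNReal.limsup_sq]
  exact limsup_le_limsup ((eventually_gt_atTop 0).mono fun T hT => ofReal_mean_sq_le_rms_sq u hT)

lemma limsup_rms_sq_eq_powerSq {u : ℝ → ℝ}
    (hu : ∀ T, 0 < T → MemLp u 2 (volume.restrict (Ioc 0 T))) :
    limsup (rms u) atTop ^ 2 = powerSq u := by
  rw [← ENNReal.limsup_sq]
  exact limsup_congr ((eventually_gt_atTop 0).mono fun T hT => (hu T hT).rms_sq hT)

lemma restrict_Ioc_le_restrict_Ici (T : ℝ) :
    volume.restrict (Ioc (0 : ℝ) T) ≤ volume.restrict (Ici 0) :=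
  Measure.restrict_mono (Ioc_subset_Icc_self.trans Icc_subset_Ici_self) le_rfl

lemma rms_add_le {u v : ℝ → ℝ} (hu : AEStronglyMeasurable u (volume.restrict (Ici 0)))
    (hv : AEStronglyMeasurable v (volume.restrict (Ici 0))) (T : ℝ) :
    rms (u + v) T ≤ rms u T + rms v T := by
  rw [rms, rms, rms, ← mul_add]
  gcongr
  exact eLpNorm_add_le (hu.mono_measure (restrict_Ioc_le_restrict_Ici T))
    (hv.mono_measure (restrict_Ioc_le_restrict_Ici T)) one_le_two

lemma MemL2pos.tendsto_rms_zero {u : ℝ → ℝ} (hu : MemL2pos u) : Tendsto (rms u) atTop (𝓝 0) := by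
  have hsqrt : Tendsto (fun T : ℝ => (ENNReal.ofReal √T)⁻¹) atTop (𝓝 0) := by
    rw [← ENNReal.inv_top, tendsto_inv_iff]
    exact ENNReal.tendsto_ofReal_atTop.comp Real.tendsto_sqrt_atTop
  have hbound : Tendsto (fun T : ℝ => (ENNReal.ofReal √T)⁻¹ *
      eLpNorm u 2 (volume.restrict (Ici 0))) atTop (𝓝 0) := by
    simpa using ENNReal.Tendsto.mul_const hsqrt (Or.inr hu.eLpNorm_ne_top)
  refine tendsto_of_tendsto_of_tendsto_of_le_of_le tendsto_const_nhds hbound (fun _ => zero_le)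
    fun T => ?_
  exact mul_le_mul_right (eLpNorm_mono_measure _ (restrict_Ioc_le_restrict_Ici T)) _

lemma trunc_eq_indicator (u : ℝ → ℝ) (T : ℝ) : trunc u T = (Icc 0 T).indicator u := by
  funext t
  simp [trunc, indicator_apply]

lemma restrict_Ici_restrict_Icc (T : ℝ) :
    (volume.restrict (Ici (0 : ℝ))).restrict (Icc 0 T) = volume.restrict (Icc 0 T) :=
  Measure.restrict_restrict_of_subset Icc_subset_Ici_self

lemma eLpNorm_trunc (u : ℝ → ℝ) (T : ℝ) (p : ℝ≥0∞) :
    eLpNorm (trunc u T) p (volume.restrict (Ici 0)) = eLpNorm u p (volume.restrict (Icc 0 T)) := by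
  rw [trunc_eq_indicator, eLpNorm_indicator_eq_eLpNorm_restrict measurableSet_Icc,
    restrict_Ici_restrict_Icc]

lemma memL2pos_trunc {u : ℝ → ℝ} {T : ℝ} (hu : MemLp u 2 (volume.restrict (Icc 0 T))) :
    MemL2pos (trunc u T) := by
  rw [MemL2pos, trunc_eq_indicator, memLp_indicator_iff_restrict measurableSet_Icc,
    restrict_Ici_restrict_Icc]
  exact hu

lemma Causal.eLpNorm_Icc_le {H : (ℝ → ℝ) → ℝ → ℝ} {h : ℝ} (hc : Causal H) (hf : FGS H h)
    {u : ℝ → ℝ} {T : ℝ} (hT : 0 < T) (hu : MemLp u 2 (volume.restrict (Icc 0 T))) :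
    eLpNorm (H u) 2 (volume.restrict (Icc 0 T)) ≤
      ENNReal.ofReal h * eLpNorm u 2 (volume.restrict (Icc 0 T)) :=
  calc eLpNorm (H u) 2 (volume.restrict (Icc 0 T))
      = eLpNorm (H (trunc u T)) 2 (volume.restrict (Icc 0 T)) := eLpNorm_congr_ae (hc u T hT)
    _ ≤ eLpNorm (H (trunc u T)) 2 (volume.restrict (Ici 0)) :=
        eLpNorm_mono_measure _ (Measure.restrict_mono Icc_subset_Ici_self le_rfl)
    _ ≤ ENNReal.ofReal h * eLpNorm (trunc u T) 2 (volume.restrict (Ici 0)) :=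
        (hf _ (memL2pos_trunc hu)).2
    _ = ENNReal.ofReal h * eLpNorm u 2 (volume.restrict (Icc 0 T)) := by rw [eLpNorm_trunc]

lemma Causal.rms_le {H : (ℝ → ℝ) → ℝ → ℝ} {h : ℝ} (hc : Causal H) (hf : FGS H h)
    {u : ℝ → ℝ} {T : ℝ} (hT : 0 < T) (hu : MemLp u 2 (volume.restrict (Ioc 0 T))) :
    rms (H u) T ≤ ENNReal.ofReal h * rms u T := by
  have hwindow : volume.restrict (Ioc (0 : ℝ) T) = volume.restrict (Icc 0 T) :=
    Measure.restrict_congr_set Ioc_ae_eq_Icc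
  rw [rms, rms, hwindow, mul_left_comm]
  rw [hwindow] at hu
  gcongr
  exact hc.eLpNorm_Icc_le hf hT hu

lemma Causal.limsup_rms_le {H : (ℝ → ℝ) → ℝ → ℝ} {h : ℝ} (hc : Causal H) (hf : FGS H h)
    {u : ℝ → ℝ} (hu : ∀ T, 0 < T → MemLp u 2 (volume.restrict (Ioc 0 T))) :
    limsup (rms (H u)) atTop ≤ ENNReal.ofReal h * limsup (rms u) atTop := by
  rw [← ENNReal.limsup_const_mul_of_ne_top ENNReal.ofReal_ne_top]
  exact limsup_le_limsup ((eventually_gt_atTop 0).mono fun T hT => hc.rms_le hf hT (hu T hT))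

theorem power_of_L2_plus_power_input_general (H : (ℝ → ℝ) → ℝ → ℝ)
    (hcausal : Causal H) (h : ℝ) (hfgs : FGS H h)
    (u₁ u₂ : ℝ → ℝ) (hu₂ : Measurable u₂)
    (hu₁L2 : MemL2pos u₁)
    (hu₂loc : ∀ T : ℝ, 0 < T → IntegrableOn (fun t => (u₂ t) ^ 2) (Set.Ioc 0 T)) :
    powerSq (H (fun t => u₁ t + u₂ t)) ≤ ENNReal.ofReal (h ^ 2) * powerSq u₂ := by
  have hu₂_memLp (T : ℝ) (hT : 0 < T) : MemLp u₂ 2 (volume.restrict (Ioc 0 T)) :=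
    (memLp_two_iff_integrable_sq hu₂.aestronglyMeasurable).2 (hu₂loc T hT)
  have hsum_memLp (T : ℝ) (hT : 0 < T) : MemLp (u₁ + u₂) 2 (volume.restrict (Ioc 0 T)) :=
    (hu₁L2.mono_measure (restrict_Ioc_le_restrict_Ici T)).add (hu₂_memLp T hT)
  calc powerSq (H (u₁ + u₂))
      ≤ limsup (rms (H (u₁ + u₂))) atTop ^ 2 := powerSq_le_limsup_rms_sq _
    _ ≤ (ENNReal.ofReal h * limsup (rms (u₁ + u₂)) atTop) ^ 2 := by
        gcongr
        exact hcausal.limsup_rms_le hfgs hsum_memLp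
    _ ≤ (ENNReal.ofReal h * limsup (rms u₁ + rms u₂) atTop) ^ 2 := by
        gcongr
        exact limsup_le_limsup (.of_forall (rms_add_le hu₁L2.1 hu₂.aestronglyMeasurable))
    _ = ENNReal.ofReal h ^ 2 * powerSq u₂ := by
        rw [ENNReal.limsup_add_of_left_tendsto_zero hu₁L2.tendsto_rms_zero, mul_pow,
          limsup_rms_sq_eq_powerSq hu₂_memLp]
    _ ≤ ENNReal.ofReal (h ^ 2) * powerSq u₂ := by
        gcongr
        exact ENNReal.ofReal_sq_le h

/-- If `H` is causal and finite-gain stable with gain `h`, `u₁ ∈ L²([0,∞))` and `u₂` is a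
power signal, then `‖H(u₁ + u₂)‖_P² ≤ h² ‖u₂‖_P²`: adding small power noise `u₂` to an
`L²` input yields small power output. -/
theorem power_of_L2_plus_power_input (H : (ℝ → ℝ) → ℝ → ℝ)
    (hmeas : ∀ u : ℝ → ℝ, Measurable u → Measurable (H u))
    (hcausal : Causal H) (h : ℝ) (hh : 0 ≤ h) (hfgs : FGS H h)
    (u₁ u₂ : ℝ → ℝ) (hu₁ : Measurable u₁) (hu₂ : Measurable u₂)
    (hu₁supp : ∀ t : ℝ, t < 0 → u₁ t = 0) (hu₂supp : ∀ t : ℝ, t < 0 → u₂ t = 0)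
    (hu₁L2 : MemL2pos u₁)
    (hu₂loc : ∀ T : ℝ, 0 < T → IntegrableOn (fun t => (u₂ t) ^ 2) (Set.Ioc 0 T))
    (hu₂pow : powerSq u₂ < ⊤) :
    powerSq (H (fun t => u₁ t + u₂ t)) ≤ ENNReal.ofReal (h ^ 2) * powerSq u₂ :=
  power_of_L2_plus_power_input_general H hcausal h hfgs u₁ u₂ hu₂ hu₁L2 hu₂loc
end

section
/- Let N be a periodic MMB nonlinearity with period T > 0, let u ∈ L²(ℝ) and y(t) = N(t, u(t)). Let h : ℤ → ℝ be Altshuller multiplier data with period T (hₙ ≥ 0 for all n, h₀ = 0, (hₙ) summable with Σ_{n∈ℤ} hₙ < 1). Then Σ_{n∈ℤ} hₙ ∫_ℝ u(t − nT)·y(t) dt ≤ ∫_ℝ u(t)·y(t) dt; equivalently, ∫_ℝ (u(t) − Σ_{n∈ℤ} hₙ u(t − nT))·y(t) dt ≥ 0, i.e. the Altshuller multiplier preserves the positivity of the periodic nonlinearity. -/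
open MeasureTheory

/-- A periodic memoryless, monotone and bounded (MMB) nonlinearity with period `T`. -/
def IsPeriodicMMB (N : ℝ → ℝ → ℝ) (T : ℝ) : Prop :=
  Measurable (Function.uncurry N) ∧
  (∀ t x : ℝ, N (t + T) x = N t x) ∧
  (∀ t : ℝ, Monotone (N t)) ∧
  ∃ C : ℝ, 0 ≤ C ∧ ∀ t x : ℝ, |N t x| ≤ C * |x|

/-- Altshuller multiplier data: a summable family `h : ℤ → ℝ` with `hₙ ≥ 0`,
`h₀ = 0` and `Σₙ hₙ < 1`. -/
def AltshullerData (h : ℤ → ℝ) : Prop :=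
  Summable h ∧ (∀ n : ℤ, 0 ≤ h n) ∧ h 0 = 0 ∧ ∑' n : ℤ, h n < 1

/-!
With the potential `Φ(t, x) = ∫₀ˣ N(t, s) ds`, monotonicity of `N t` gives the pointwise
gradient inequality `Φ(t, x) - Φ(t, z) ≤ N(t, x) (x - z)`. Take `x = u(t)` and `z = u(t - nT)`:
by periodicity `Φ(t, u(t - nT)) = Φ(t - nT, u(t - nT))`, and `Φ(·, u(·))` is integrable
since `|Φ(t, x)| ≤ C x²`, so integrating over `ℝ` the left side vanishes by translation
invariance, whence `∫ u(t - nT) y(t) dt ≤ ∫ u(t) y(t) dt` for every `n`. The latter integral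
is nonnegative, and the weights `hₙ` are nonnegative with sum below `1`.
-/

theorem Monotone.intervalIntegral_le_mul_sub {f : ℝ → ℝ} (hf : Monotone f) (a b : ℝ) :
    ∫ s in a..b, f s ≤ f b * (b - a) := by
  rcases le_total a b with hab | hba
  · calc ∫ s in a..b, f s ≤ ∫ _ in a..b, f b :=
          intervalIntegral.integral_mono_on hab hf.intervalIntegrable intervalIntegrable_const
            fun s hs => hf hs.2
      _ = f b * (b - a) := by simp [mul_comm]
  · have h : ∫ _ in b..a, f b ≤ ∫ s in b..a, f s :=
      intervalIntegral.integral_mono_on hba intervalIntegrable_const hf.intervalIntegrable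
        fun s hs => hf hs.1
    rw [intervalIntegral.integral_symm]
    simp only [intervalIntegral.integral_const, smul_eq_mul] at h
    linarith

theorem mul_nonneg_of_monotone {f : ℝ → ℝ} (hf : Monotone f) (hf0 : f 0 = 0) (x : ℝ) :
    0 ≤ x * f x := by
  rcases le_total 0 x with hx | hx
  · exact mul_nonneg hx (hf0 ▸ hf hx)
  · exact mul_nonneg_of_nonpos_of_nonpos hx (hf0 ▸ hf hx)

theorem abs_mul_le_of_abs_le_mul {C p q y : ℝ} (hC : 0 ≤ C) (hy : |y| ≤ C * |q|) :
    |p * y| ≤ C * (p ^ 2 + q ^ 2) := by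
  rw [abs_mul]
  nlinarith [abs_nonneg p, abs_nonneg q, sq_abs p, sq_abs q, sq_nonneg (|p| - |q|),
    mul_le_mul_of_nonneg_left hy (abs_nonneg p)]

theorem intervalIntegral_zero_eq_mul_integral_comp_mul (f : ℝ → ℝ) (x : ℝ) :
    ∫ s in (0 : ℝ)..x, f s = x * ∫ s in (0 : ℝ)..1, f (s * x) := by
  rcases eq_or_ne x 0 with rfl | hx
  · simp
  · rw [intervalIntegral.integral_comp_mul_right f hx]
    simp [hx]

theorem abs_intervalIntegral_zero_le {f : ℝ → ℝ} {C : ℝ} (hC : 0 ≤ C)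
    (hf : ∀ s, |f s| ≤ C * |s|) (x : ℝ) :
    |∫ s in (0 : ℝ)..x, f s| ≤ C * x ^ 2 := by
  have hle : ∀ s ∈ Set.uIoc (0 : ℝ) x, ‖f s‖ ≤ C * |x| := fun s hs =>
    (hf s).trans (mul_le_mul_of_nonneg_left
      (by simpa using Set.abs_sub_left_of_mem_uIcc (Set.uIoc_subset_uIcc hs)) hC)
  simpa [mul_assoc, ← sq] using intervalIntegral.norm_integral_le_of_norm_le_const hle

noncomputable def potential (N : ℝ → ℝ → ℝ) (t x : ℝ) : ℝ :=
  ∫ s in (0 : ℝ)..x, N t s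

section Nonlinearity

variable {N : ℝ → ℝ → ℝ} {u : ℝ → ℝ}

theorem potential_sub_potential_le {t : ℝ} (hmono : Monotone (N t)) (x z : ℝ) :
    potential N t x - potential N t z ≤ N t x * (x - z) := by
  rw [potential, potential, intervalIntegral.integral_interval_sub_left
    hmono.intervalIntegrable hmono.intervalIntegrable]
  exact hmono.intervalIntegral_le_mul_sub z x

theorem Measurable.stronglyMeasurable_potential_comp (hN : Measurable (Function.uncurry N))
    (hu : Measurable u) : StronglyMeasurable fun t => potential N t (u t) := by
  have hF : StronglyMeasurable fun p : ℝ × ℝ => N p.1 (p.2 * u p.1) :=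
    (hN.comp (measurable_fst.prodMk
      (measurable_snd.mul (hu.comp measurable_fst)))).stronglyMeasurable
  -- rescaling to the fixed interval `(0, 1]` turns this into a parametric integral
  have hscaled : (fun t => potential N t (u t)) =
      fun t => u t * ∫ s in Set.Ioc (0 : ℝ) 1, N t (s * u t) := by
    funext t
    rw [potential, intervalIntegral_zero_eq_mul_integral_comp_mul,
      intervalIntegral.integral_of_le zero_le_one]
  rw [hscaled]
  exact hu.stronglyMeasurable.mul hF.integral_prod_right'

variable {C : ℝ} (hmeas : Measurable (Function.uncurry N)) (hC : 0 ≤ C)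
  (hbd : ∀ t x, |N t x| ≤ C * |x|) (hu : Measurable u) (huL2 : MemLp u 2 volume)
include hmeas hC hbd hu huL2

theorem integrable_potential_comp : Integrable (fun t => potential N t (u t)) volume :=
  (huL2.integrable_sq.const_mul C).mono'
    (hmeas.stronglyMeasurable_potential_comp hu).aestronglyMeasurable
    (ae_of_all _ fun t => abs_intervalIntegral_zero_le hC (hbd t) (u t))

theorem integrable_comp_sub_mul (a : ℝ) :
    Integrable (fun t => u (t - a) * N t (u t)) volume :=
  (((huL2.integrable_sq.comp_sub_right a).add huL2.integrable_sq).const_mul C).mono'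
    ((hu.comp (measurable_id.sub_const a)).mul
      (hmeas.comp (measurable_id.prodMk hu))).aestronglyMeasurable
    (ae_of_all _ fun t => abs_mul_le_of_abs_le_mul hC (hbd t (u t)))

theorem abs_integral_comp_sub_mul_le (a : ℝ) :
    |∫ t, u (t - a) * N t (u t)| ≤ C * (2 * ∫ t, u t ^ 2) := by
  have hsq := huL2.integrable_sq
  calc |∫ t, u (t - a) * N t (u t)| ≤ ∫ t, |u (t - a) * N t (u t)| :=
        abs_integral_le_integral_abs
    _ ≤ ∫ t, C * (u (t - a) ^ 2 + u t ^ 2) :=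
        integral_mono (integrable_comp_sub_mul hmeas hC hbd hu huL2 a).abs
          (((hsq.comp_sub_right a).add hsq).const_mul C)
          fun t => abs_mul_le_of_abs_le_mul hC (hbd t (u t))
    _ = C * (2 * ∫ t, u t ^ 2) := by
        rw [integral_const_mul, integral_add (hsq.comp_sub_right a) hsq,
          integral_sub_right_eq_self (fun t => u t ^ 2) a, two_mul]

theorem integral_comp_sub_mul_le (hmono : ∀ t, Monotone (N t)) {a : ℝ}
    (hper : ∀ t x, N (t - a) x = N t x) :
    ∫ t, u (t - a) * N t (u t) ≤ ∫ t, u t * N t (u t) := by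
  set Φ : ℝ → ℝ := fun t => potential N t (u t)
  have hΦ : Integrable Φ volume := integrable_potential_comp hmeas hC hbd hu huL2
  have hΦ_shift : ∫ t, (Φ t - Φ (t - a)) = 0 := by
    rw [integral_sub hΦ (hΦ.comp_sub_right a), integral_sub_right_eq_self, sub_self]
  have hpointwise : ∀ t, Φ t - Φ (t - a) ≤ u t * N t (u t) - u (t - a) * N t (u t) := by
    intro t
    have hΦa : Φ (t - a) = potential N t (u (t - a)) := by
      simp only [Φ, potential, hper]
    have := potential_sub_potential_le (hmono t) (u t) (u (t - a))
    rw [hΦa]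
    linarith
  have hI0 : Integrable (fun t => u t * N t (u t)) volume := by
    simpa using integrable_comp_sub_mul hmeas hC hbd hu huL2 0
  have hIa := integrable_comp_sub_mul hmeas hC hbd hu huL2 a
  refine sub_nonneg.mp ?_
  calc 0 = ∫ t, (Φ t - Φ (t - a)) := hΦ_shift.symm
    _ ≤ ∫ t, (u t * N t (u t) - u (t - a) * N t (u t)) :=
        integral_mono (hΦ.sub (hΦ.comp_sub_right a)) (hI0.sub hIa) hpointwise
    _ = _ := integral_sub hI0 hIa

end Nonlinearity

theorem tsum_mul_le_of_le {ι : Type*} {w x : ι → ℝ} {I B : ℝ} (hw : Summable w)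
    (hw0 : ∀ n, 0 ≤ w n) (hw1 : ∑' n, w n ≤ 1) (hxI : ∀ n, x n ≤ I) (hI : 0 ≤ I)
    (hxB : ∀ n, |x n| ≤ B) : ∑' n, w n * x n ≤ I := by
  have hsummable : Summable fun n => w n * x n :=
    (hw.mul_right B).of_norm_bounded fun n => by
      rw [norm_mul, Real.norm_of_nonneg (hw0 n)]
      exact mul_le_mul_of_nonneg_left (hxB n) (hw0 n)
  calc ∑' n, w n * x n ≤ ∑' n, w n * I :=
        hsummable.tsum_le_tsum (fun n => mul_le_mul_of_nonneg_left (hxI n) (hw0 n))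
          (hw.mul_right I)
    _ = (∑' n, w n) * I := tsum_mul_right
    _ ≤ I := mul_le_of_le_one_left hI hw1

theorem altshuller_preserves_positivity_general (N : ℝ → ℝ → ℝ) (T : ℝ)
    (hN : IsPeriodicMMB N T) (u : ℝ → ℝ) (hu : Measurable u)
    (huL2 : MemLp u 2 (volume : Measure ℝ))
    (h : ℤ → ℝ) (hAlt : AltshullerData h) :
    ∑' n : ℤ, h n * ∫ t : ℝ, u (t - n * T) * N t (u t) ≤
      ∫ t : ℝ, u t * N t (u t) := by
  obtain ⟨hmeas, hperT, hmono, C, hC, hbd⟩ := hN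
  obtain ⟨hsum, hnonneg, -, hlt⟩ := hAlt
  have hper (n : ℤ) (t x : ℝ) : N (t - n * T) x = N t x :=
    (Function.Periodic.int_mul (f := (N · x)) (fun t => hperT t x) n).sub_eq t
  have hN0 (t : ℝ) : N t 0 = 0 := abs_nonpos_iff.mp (by simpa using hbd t 0)
  exact tsum_mul_le_of_le hsum hnonneg hlt.le
    (fun n => integral_comp_sub_mul_le hmeas hC hbd hu huL2 hmono (hper n))
    (integral_nonneg fun t => mul_nonneg_of_monotone (hmono t) (hN0 t) (u t))
    (fun n => abs_integral_comp_sub_mul_le hmeas hC hbd hu huL2 _)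

/-- An Altshuller multiplier with period `T` preserves the positivity of a periodic
MMB nonlinearity with period `T`:
`Σₙ hₙ ∫ u(t − nT) y(t) dt ≤ ∫ u(t) y(t) dt` where `y(t) = N(t, u(t))`. -/
theorem altshuller_preserves_positivity (N : ℝ → ℝ → ℝ) (T : ℝ) (hT : 0 < T)
    (hN : IsPeriodicMMB N T) (u : ℝ → ℝ) (hu : Measurable u)
    (huL2 : MemLp u 2 (volume : Measure ℝ))
    (h : ℤ → ℝ) (hAlt : AltshullerData h) :
    ∑' n : ℤ, h n * ∫ t : ℝ, u (t - n * T) * N t (u t) ≤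
      ∫ t : ℝ, u t * N t (u t) :=
  altshuller_preserves_positivity_general N T hN u hu huL2 h hAlt
end
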